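/- For all natural numbers m, n, a with m ≥ 2, 1 ≤ a ≤ 9 and a ≠ 6, the equation B_n = a·(10^m−1)/9 has no solution. -/
import Mathlib


def B : ℕ → ℕ
  | 0 => 0
  | 1 => 1
  | n + 2 => 6 * B (n + 1) - B n

lemma B_mono : ∀ n, B n ≤ B (n + 1)
  | 0 => by simp [B]
  | n + 1 => by
    have h := B_mono n
    show B (n + 1) ≤ 6 * B (n + 1) - B n
    omega

lemma B_rec (n : ℕ) : B (n + 2) + B n = 6 * B (n + 1) := by
  have h := B_mono n
  show (6 * B (n + 1) - B n) + B n = 6 * B (n + 1)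
  omega

lemma B_base : B 60 % 1100 = 0 ∧ B 61 % 1100 = 1 := by decide

lemma B_period : ∀ n, B (n + 60) % 1100 = B n % 1100 ∧
    B (n + 61) % 1100 = B (n + 1) % 1100
  | 0 => B_base
  | n + 1 => by
    obtain ⟨h60, h61⟩ := B_period n
    have h1 := B_rec (n + 60)
    have h2 := B_rec n
    rw [show n + 60 + 2 = n + 62 from by omega, show n + 60 + 1 = n + 61 from by omega] at h1
    refine ⟨by rw [show n + 1 + 60 = n + 61 from by omega]; exact h61, ?_⟩
    rw [show n + 1 + 61 = n + 62 from by omega, show n + 1 + 1 = n + 2 from by omega]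
    omega

lemma B_mod_aux : ∀ k n, B (60 * k + n) % 1100 = B n % 1100
  | 0, n => by simp
  | k + 1, n => by
    have h1 := B_mod_aux k n
    have h2 := (B_period (60 * k + n)).1
    have e : 60 * (k + 1) + n = 60 * k + n + 60 := by ring
    rw [e, h2, h1]

lemma B_mod (n : ℕ) : B n % 1100 = B (n % 60) % 1100 := by
  conv_lhs => rw [← Nat.div_add_mod n 60]
  exact B_mod_aux (n / 60) (n % 60)

lemma pow10_mod : ∀ m, 10 ^ (m + 2) % 1100 = 100 ∨ 10 ^ (m + 2) % 1100 = 1000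
  | 0 => by norm_num
  | m + 1 => by
    have h := pow10_mod m
    have e : 10 ^ (m + 1 + 2) = 10 * 10 ^ (m + 2) := by ring
    rw [e, Nat.mul_mod]
    rcases h with h | h <;> rw [h] <;> norm_num

lemma key : ∀ i : Fin 60, ∀ a : Fin 10, 1 ≤ (a : ℕ) → (a : ℕ) ≠ 6 →
    (9 * B i) % 1100 ≠ ((a : ℕ) * 99) % 1100 ∧
    (9 * B i) % 1100 ≠ ((a : ℕ) * 999) % 1100 := by decide

theorem stmt1 (m n a : ℕ) (hm : 2 ≤ m) (ha1 : 1 ≤ a) (ha9 : a ≤ 9) (ha6 : a ≠ 6) :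
    9 * B n ≠ a * (10 ^ m - 1) := by
  intro heq
  obtain ⟨k, rfl⟩ : ∃ k, m = k + 2 := ⟨m - 2, by omega⟩
  have hp := pow10_mod k
  have hge : 1 ≤ 10 ^ (k + 2) := Nat.one_le_pow _ _ (by norm_num)
  have hr : (10 ^ (k + 2) - 1) % 1100 = 99 ∨ (10 ^ (k + 2) - 1) % 1100 = 999 := by omega
  have hmod : (9 * B n) % 1100 = (a * (10 ^ (k + 2) - 1)) % 1100 := by rw [heq]
  rw [Nat.mul_mod, B_mod, ← Nat.mul_mod] at hmod
  rw [Nat.mul_mod (a := a) (b := 10 ^ (k + 2) - 1),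
    Nat.mod_eq_of_lt (show a < 1100 by omega)] at hmod
  have hlt : n % 60 < 60 := Nat.mod_lt _ (by norm_num)
  have halt : a < 10 := by omega
  have := key ⟨n % 60, hlt⟩ ⟨a, halt⟩ ha1 ha6
  simp only [Fin.val_mk] at this
  rcases hr with h | h <;> rw [h] at hmod
  · exact this.1 hmod
  · exact this.2 hmod
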